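/- arXiv:2511.13461 — 3 statements merged into one kernel-verified Lean document; each statement's English description precedes it below -/
import Mathlib

section
/- Let φ : ℝ^d → ℝ be radial, continuous, bounded, with φ(r) → 0 as r → ∞, ∫₀^∞ |log(r) φ'(r)| dr < ∞, lim_{r→0⁺}(φ(r)-φ(0)) log r = 0, and lim_{r→∞} φ(r) log r = 0. Then for every x ≠ 0, lim_{T→∞} ( ∫₀^T t^{-1} φ(|x|/t) dt − C_{φ,T} ) = −φ(0) log|x|, where C_{φ,T} := φ(0) log T − ∫₀^∞ log(r) φ'(r) dr. -/
/-!
The substitution `r = ‖x‖ / t` turns the integral into `∫_{ε}^∞ ψ(r) / r dr` with `ε = ‖x‖ / T`.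
Integrating `(ψ log)' = log · ψ' + ψ / r` over `(ε, ∞)` gives
`∫_ε^∞ ψ(r) / r dr + ψ(0) log ε = -(ψ(ε) - ψ(0)) log ε - ∫_ε^∞ log r ψ'(r) dr`,
which tends to `-∫_0^∞ log r ψ'(r) dr` as `ε → 0⁺`; since `log ε = log ‖x‖ - log T`, this is
the claim. The delicate point is that `ψ(r) / r` is integrable at infinity: `|ψ(r)| ≤ ∫_r^∞ |ψ'|`,
and by Tonelli `∫_c^∞ r⁻¹ ∫_r^∞ |ψ'| = ∫_c^∞ |ψ'(s)| log (s / c) ds`, which is dominated by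
`∫ |log s ψ'(s)|` once `c ≥ 1`.
-/

open MeasureTheory Filter Set Topology
open scoped ENNReal

theorem lintegral_Ioo_ofReal_inv {c s : ℝ} (hc : 0 < c) (hcs : c ≤ s) :
    ∫⁻ r in Ioo c s, ENNReal.ofReal r⁻¹ = ENNReal.ofReal (Real.log (s / c)) := by
  have hinv : IntegrableOn (fun r : ℝ => r⁻¹) (Ioo c s) :=
    ((continuousOn_inv₀.mono fun r hr => (hc.trans_le hr.1).ne').integrableOn_Icc).mono_set
      Ioo_subset_Icc_self
  rw [← ofReal_integral_eq_lintegral_ofReal hinv (ae_restrict_of_forall_mem measurableSet_Ioo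
      fun r hr => inv_nonneg.2 (hc.trans hr.1).le), ← integral_Ioc_eq_integral_Ioo,
    ← intervalIntegral.integral_of_le hcs, integral_inv_of_pos hc (hc.trans_le hcs)]

theorem lintegral_Ioi_lintegral_Ioi_mul_ofReal_inv {g : ℝ → ℝ≥0∞} (hg : Measurable g) {c : ℝ}
    (hc : 0 < c) :
    ∫⁻ r in Ioi c, (∫⁻ s in Ioi r, g s) * ENNReal.ofReal r⁻¹
      = ∫⁻ s in Ioi c, g s * ENNReal.ofReal (Real.log (s / c)) := by
  set K : ℝ × ℝ → ℝ≥0∞ := {p | p.1 < p.2}.indicator fun p => g p.2 * ENNReal.ofReal p.1⁻¹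
  have hK : Measurable K := ((hg.comp measurable_snd).mul
    measurable_fst.inv.ennreal_ofReal).indicator (measurableSet_lt measurable_fst measurable_snd)
  calc ∫⁻ r in Ioi c, (∫⁻ s in Ioi r, g s) * ENNReal.ofReal r⁻¹
      = ∫⁻ r in Ioi c, ∫⁻ s, K (r, s) := by
        refine lintegral_congr fun r => ?_
        rw [← lintegral_mul_const _ hg, ← lintegral_indicator measurableSet_Ioi]
        congr 1 with s
    _ = ∫⁻ s, ∫⁻ r in Ioi c, K (r, s) := lintegral_lintegral_swap hK.aemeasurable
    _ = ∫⁻ s, (Ioi c).indicator (fun s => g s * ENNReal.ofReal (Real.log (s / c))) s := by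
        refine lintegral_congr fun s => ?_
        have hK_s : (fun r => K (r, s)) = (Iio s).indicator fun r => g s * ENNReal.ofReal r⁻¹ := by
          ext r
          by_cases h : r < s <;> simp [K, h]
        rw [hK_s, lintegral_indicator measurableSet_Iio, Measure.restrict_restrict measurableSet_Iio,
          Iio_inter_Ioi, lintegral_const_mul _ measurable_inv.ennreal_ofReal]
        rcases lt_or_ge c s with hcs | hsc
        · rw [lintegral_Ioo_ofReal_inv hc hcs.le, indicator_of_mem (mem_Ioi.2 hcs)]
        · rw [Ioo_eq_empty_of_le hsc, indicator_of_notMem (notMem_Ioi.2 hsc)]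
          simp
    _ = ∫⁻ s in Ioi c, g s * ENNReal.ofReal (Real.log (s / c)) :=
        lintegral_indicator measurableSet_Ioi _

theorem integrableOn_Ioi_div_of_integrableOn_log_mul_deriv {f f' : ℝ → ℝ} {c : ℝ} (hc : 1 < c)
    (hf : ∀ r ∈ Ioi c, HasDerivAt f (f' r) r) (hf_top : Tendsto f atTop (𝓝 0))
    (hint : IntegrableOn (fun r => Real.log r * f' r) (Ioi c)) :
    IntegrableOn (fun r => f r / r) (Ioi c) := by
  have hc0 : 0 < c := zero_lt_one.trans hc
  have hlogc : 0 < Real.log c := Real.log_pos hc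
  have hf'_int : IntegrableOn f' (Ioi c) := by
    refine IntegrableOn.congr_fun (hint.bdd_mul (f := fun r => (Real.log r)⁻¹) (c := (Real.log c)⁻¹)
      Real.measurable_log.inv.aestronglyMeasurable
      (ae_restrict_of_forall_mem measurableSet_Ioi fun r hr => ?_)) (fun r hr => ?_)
      measurableSet_Ioi
    · have hlogr : Real.log c < Real.log r := Real.log_lt_log hc0 hr
      rw [norm_inv, Real.norm_of_nonneg (hlogc.trans hlogr).le]
      exact inv_anti₀ hlogc hlogr.le
    · have hlogr : 0 < Real.log r := Real.log_pos (hc.trans hr)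
      exact inv_mul_cancel_left₀ hlogr.ne' _
  have hf_tail : ∀ r ∈ Ioi c, ‖f r‖ₑ ≤ ∫⁻ s in Ioi r, ‖deriv f s‖ₑ := by
    intro r hr
    have hsub : Ioi r ⊆ Ioi c := Ioi_subset_Ioi hr.le
    have hderiv : ∀ s ∈ Ioi r, HasDerivAt f (f' s) s := fun s hs => hf s (hsub hs)
    have hFTC := integral_Ioi_of_hasDerivAt_of_tendsto (hf r hr).continuousAt.continuousWithinAt
      hderiv (hf'_int.mono_set hsub) hf_top
    calc ‖f r‖ₑ = ‖∫ s in Ioi r, f' s‖ₑ := by rw [hFTC, zero_sub, enorm_neg]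
      _ ≤ ∫⁻ s in Ioi r, ‖f' s‖ₑ := enorm_integral_le_lintegral_enorm _
      _ = ∫⁻ s in Ioi r, ‖deriv f s‖ₑ := setLIntegral_congr_fun measurableSet_Ioi
          fun s hs => by rw [(hderiv s hs).deriv]
  refine ⟨(ContinuousOn.div (fun r hr => (hf r hr).continuousAt.continuousWithinAt)
    continuousOn_id fun r hr => (hc0.trans hr).ne').aestronglyMeasurable measurableSet_Ioi, ?_⟩
  calc ∫⁻ r in Ioi c, ‖f r / r‖ₑ
      ≤ ∫⁻ r in Ioi c, (∫⁻ s in Ioi r, ‖deriv f s‖ₑ) * ENNReal.ofReal r⁻¹ := by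
        refine lintegral_mono_ae (ae_restrict_of_forall_mem measurableSet_Ioi fun r hr => ?_)
        rw [div_eq_mul_inv, enorm_mul, Real.enorm_of_nonneg (inv_nonneg.2 (hc0.trans hr).le)]
        gcongr
        exact hf_tail r hr
    _ = ∫⁻ s in Ioi c, ‖deriv f s‖ₑ * ENNReal.ofReal (Real.log (s / c)) :=
        lintegral_Ioi_lintegral_Ioi_mul_ofReal_inv (measurable_deriv f).enorm hc0
    _ ≤ ∫⁻ s in Ioi c, ‖Real.log s * f' s‖ₑ := by
        refine lintegral_mono_ae (ae_restrict_of_forall_mem measurableSet_Ioi fun s hs => ?_)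
        have hlogs : 0 ≤ Real.log s := (Real.log_pos (hc.trans hs)).le
        rw [(hf s hs).deriv, enorm_mul, Real.enorm_of_nonneg hlogs, mul_comm]
        gcongr ENNReal.ofReal ?_ * _
        rw [Real.log_div (hc0.trans hs).ne' hc0.ne']
        linarith
    _ < ∞ := hint.2

theorem aestronglyMeasurable_of_hasDerivAt {F : Type*} [NormedAddCommGroup F] [NormedSpace ℝ F]
    [CompleteSpace F] {f f' : ℝ → F} {μ : Measure ℝ} {s : Set ℝ} (hs : MeasurableSet s)
    (hf : ∀ x ∈ s, HasDerivAt f (f' x) x) : AEStronglyMeasurable f' (μ.restrict s) :=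
  (aestronglyMeasurable_deriv f _).congr (ae_restrict_of_forall_mem hs fun x hx => (hf x hx).deriv)

section

variable {f f' : ℝ → ℝ}

theorem integrableOn_Ioi_div_of_hasDerivAt (hf : ∀ r, 0 < r → HasDerivAt f (f' r) r)
    (hf_top : Tendsto f atTop (𝓝 0)) (hint : IntegrableOn (fun r => Real.log r * f' r) (Ioi 0))
    {ε : ℝ} (hε : 0 < ε) : IntegrableOn (fun r => f r / r) (Ioi ε) := by
  have hnear : IntegrableOn (fun r => f r / r) (Icc ε 2) :=
    ContinuousOn.integrableOn_Icc <| ContinuousOn.div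
      (fun r hr => (hf r (hε.trans_le hr.1)).continuousAt.continuousWithinAt) continuousOn_id
      fun r hr => (hε.trans_le hr.1).ne'
  have hfar : IntegrableOn (fun r => f r / r) (Ioi 2) :=
    integrableOn_Ioi_div_of_integrableOn_log_mul_deriv one_lt_two
      (fun r hr => hf r (two_pos.trans hr)) hf_top (hint.mono_set (Ioi_subset_Ioi zero_le_two))
  refine (hnear.union hfar).mono_set fun r hr => ?_
  rcases le_or_gt r 2 with h | h
  · exact Or.inl ⟨hr.le, h⟩
  · exact Or.inr h

theorem setIntegral_Ioi_div_eq_of_hasDerivAt (hf : ∀ r, 0 < r → HasDerivAt f (f' r) r)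
    (hf_top : Tendsto f atTop (𝓝 0)) (hint : IntegrableOn (fun r => Real.log r * f' r) (Ioi 0))
    (hlog_top : Tendsto (fun r => f r * Real.log r) atTop (𝓝 0)) {ε : ℝ} (hε : 0 < ε) :
    ∫ r in Ioi ε, f r / r = -(f ε * Real.log ε) - ∫ r in Ioi ε, Real.log r * f' r := by
  have hdiv := integrableOn_Ioi_div_of_hasDerivAt hf hf_top hint hε
  have hintε := hint.mono_set (Ioi_subset_Ioi hε.le)
  have hprod : ∀ r ∈ Ioi ε, HasDerivAt (fun r => f r * Real.log r)
      (Real.log r * f' r + f r / r) r := fun r hr =>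
    ((hf r (hε.trans hr)).mul (Real.hasDerivAt_log (hε.trans hr).ne')).congr_deriv (by ring)
  have hFTC := integral_Ioi_of_hasDerivAt_of_tendsto (f := fun r => f r * Real.log r)
    ((hf ε hε).continuousAt.mul (Real.continuousAt_log hε.ne')).continuousWithinAt
    hprod (hintε.add hdiv) hlog_top
  rw [integral_add hintε hdiv] at hFTC
  linarith

theorem tendsto_setIntegral_Ioi_div_add_mul_log (hf : ∀ r, 0 < r → HasDerivAt f (f' r) r)
    (hf_top : Tendsto f atTop (𝓝 0)) (hint : IntegrableOn (fun r => Real.log r * f' r) (Ioi 0))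
    (hlog_top : Tendsto (fun r => f r * Real.log r) atTop (𝓝 0))
    (hlog_zero : Tendsto (fun r => (f r - f 0) * Real.log r) (𝓝[>] 0) (𝓝 0)) :
    Tendsto (fun ε => (∫ r in Ioi ε, f r / r) + f 0 * Real.log ε) (𝓝[>] 0)
      (𝓝 (-∫ r in Ioi 0, Real.log r * f' r)) := by
  have htail : Tendsto (fun ε => ∫ r in Ioi ε, Real.log r * f' r) (𝓝[>] 0)
      (𝓝 (∫ r in Ioi 0, Real.log r * f' r)) :=
    hint.continuousWithinAt_Ici_primitive_Ioi.mono_left (nhdsWithin_mono _ Ioi_subset_Ici_self)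
  have hlim := hlog_zero.neg.sub htail
  rw [neg_zero, zero_sub] at hlim
  refine hlim.congr' (eventually_nhdsWithin_of_forall fun ε (hε : 0 < ε) => ?_)
  simp only [setIntegral_Ioi_div_eq_of_hasDerivAt hf hf_top hint hlog_top hε]
  ring

end

theorem setIntegral_Ioc_comp_div_div (f : ℝ → ℝ) {a T : ℝ} (ha : 0 < a) (hT : 0 < T) :
    ∫ t in Ioc 0 T, f (a / t) / t = ∫ r in Ioi (a / T), f r / r := by
  have himage : (fun t => a / t) '' Ioo 0 T = Ioi (a / T) := by
    ext r
    constructor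
    · rintro ⟨t, ⟨ht0, htT⟩, rfl⟩
      exact div_lt_div_of_pos_left ha ht0 htT
    · intro hr
      have hr0 : 0 < r := (div_pos ha hT).trans hr
      refine ⟨a / r, ⟨div_pos ha hr0, ?_⟩, by field_simp⟩
      rw [div_lt_iff₀ hr0, mul_comm]
      exact (div_lt_iff₀ hT).1 hr
  have hderiv : ∀ t ∈ Ioo 0 T, HasDerivWithinAt (fun t => a / t) (-(a / t ^ 2)) (Ioo 0 T) t :=
    fun t ht => by
      have h := ((hasDerivAt_inv ht.1.ne').const_mul a).hasDerivWithinAt (s := Ioo 0 T)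
      simpa only [← div_eq_mul_inv, mul_neg] using h
  have hinj : InjOn (fun t => a / t) (Ioo 0 T) :=
    StrictAntiOn.injOn fun t ht _ _ hts => div_lt_div_of_pos_left ha ht.1 hts
  rw [← himage, integral_image_eq_integral_abs_deriv_smul measurableSet_Ioo hderiv hinj,
    integral_Ioc_eq_integral_Ioo]
  refine setIntegral_congr_fun measurableSet_Ioo fun t ht => ?_
  have ht0 : 0 < t := ht.1
  rw [smul_eq_mul, abs_neg, abs_of_pos (by positivity)]
  field_simp

/-- `ψ` is the radial profile of `φ` and `ψ'` its derivative on `(0, ∞)`. -/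
theorem log_riesz_wavelet_representation_general (d : ℕ)
    (ψ ψ' : ℝ → ℝ)
    (hlim : Tendsto ψ atTop (nhds 0))
    (hderiv : ∀ r : ℝ, 0 < r → HasDerivAt ψ (ψ' r) r)
    (hint : IntegrableOn (fun r => |Real.log r * ψ' r|) (Ioi 0))
    (hlim0 : Tendsto (fun r => (ψ r - ψ 0) * Real.log r) (nhdsWithin 0 (Ioi 0)) (nhds 0))
    (hliminf : Tendsto (fun r => ψ r * Real.log r) atTop (nhds 0))
    (x : EuclideanSpace ℝ (Fin d)) (hx : x ≠ 0) :
    Tendsto (fun T : ℝ =>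
        (∫ t in Ioc (0:ℝ) T, ψ (‖x‖ / t) / t)
          - (ψ 0 * Real.log T - ∫ r in Ioi (0:ℝ), Real.log r * ψ' r))
      atTop (nhds (-(ψ 0) * Real.log ‖x‖)) := by
  have ha : 0 < ‖x‖ := norm_pos_iff.2 hx
  have hψ' : AEStronglyMeasurable ψ' (volume.restrict (Ioi 0)) :=
    aestronglyMeasurable_of_hasDerivAt measurableSet_Ioi hderiv
  have hint' : IntegrableOn (fun r => Real.log r * ψ' r) (Ioi 0) :=
    (integrable_norm_iff (Real.measurable_log.aestronglyMeasurable.mul hψ')).1 hint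
  have hscale : Tendsto (fun T => ‖x‖ / T) atTop (𝓝[>] 0) :=
    tendsto_nhdsWithin_iff.2 ⟨tendsto_const_nhds.div_atTop tendsto_id,
      (eventually_gt_atTop 0).mono fun T hT => div_pos ha hT⟩
  have hren := ((tendsto_setIntegral_Ioi_div_add_mul_log hderiv hlim hint' hliminf hlim0).comp
    hscale).add_const ((∫ r in Ioi 0, Real.log r * ψ' r) + -(ψ 0 * Real.log ‖x‖))
  rw [neg_add_cancel_left, ← neg_mul] at hren
  refine hren.congr' ((eventually_gt_atTop 0).mono fun T hT => ?_)
  simp only [Function.comp_apply, setIntegral_Ioc_comp_div_div ψ ha hT,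
    Real.log_div ha.ne' hT.ne']
  ring

/-- renormalized wavelet-type representation of the logarithmic Riesz
potential `g(x) = -log|x|` (case `s = 0`). Here `ψ` is the radial profile of `φ`
and `ψ'` its derivative; `C_{φ,T} = ψ(0) log T - ∫₀^∞ log(r) ψ'(r) dr`. -/
theorem log_riesz_wavelet_representation (d : ℕ) (hd : 1 ≤ d)
    (ψ ψ' : ℝ → ℝ) (hcont : Continuous ψ) (hbdd : ∃ M, ∀ r, |ψ r| ≤ M)
    (hlim : Tendsto ψ atTop (nhds 0))
    (hderiv : ∀ r : ℝ, 0 < r → HasDerivAt ψ (ψ' r) r)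
    (hint : IntegrableOn (fun r => |Real.log r * ψ' r|) (Ioi 0))
    (hlim0 : Tendsto (fun r => (ψ r - ψ 0) * Real.log r) (nhdsWithin 0 (Ioi 0)) (nhds 0))
    (hliminf : Tendsto (fun r => ψ r * Real.log r) atTop (nhds 0))
    (x : EuclideanSpace ℝ (Fin d)) (hx : x ≠ 0) :
    Tendsto (fun T : ℝ =>
        (∫ t in Ioc (0:ℝ) T, ψ (‖x‖ / t) / t)
          - (ψ 0 * Real.log T - ∫ r in Ioi (0:ℝ), Real.log r * ψ' r))
      atTop (nhds (-(ψ 0) * Real.log ‖x‖)) :=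
  log_riesz_wavelet_representation_general d ψ ψ' hlim hderiv hint hlim0 hliminf x hx
end

section
/- Let 0 ≤ s < d, φ as above with additionally φ(x) ≤ C_γ ⟨x⟩^{-γ} for some γ > s (⟨x⟩ = (1+|x|²)^{1/2}). Define f_η := g − g_η = c_{φ,d,s} ∫₀^η t^{d-s} φ_t(x) dt/t. Then 0 ≤ f_η(x) ≤ C'_γ η^{γ-s}/|x|^γ for all x ≠ 0, where C'_γ depends only on d, s, γ, φ. -/
open MeasureTheory Set Real

/-! For `t > 0` the integrand equals `t^(-s-1) ψ(‖x‖/t)`, and the decay hypothesis gives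
`ψ(‖x‖/t) ≤ C_γ (‖x‖/t)^(-γ)`, so it is dominated by `C_γ ‖x‖^(-γ) t^(γ-s-1)`. Since `γ > s`,
this majorant is integrable at `0`, with `∫₀^η t^(γ-s-1) dt = η^(γ-s)/(γ-s)`. -/

lemma one_add_sq_rpow_neg_half_le {r γ : ℝ} (hr : 0 < r) (hγ : 0 ≤ γ) :
    (1 + r ^ 2) ^ (-γ / 2) ≤ r ^ (-γ) :=
  calc (1 + r ^ 2) ^ (-γ / 2) ≤ (r ^ 2) ^ (-γ / 2) :=
        rpow_le_rpow_of_nonpos (by positivity) (by linarith) (by linarith)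
    _ = r ^ (-γ) := by
        rw [← rpow_natCast, ← rpow_mul hr.le]
        congr 1
        ring

lemma rpow_sub_mul_rpow_neg_mul_div_self {t : ℝ} (ht : 0 < t) (a s y : ℝ) :
    t ^ (a - s) * (t ^ (-a) * y) / t = t ^ (-s - 1) * y := by
  rw [show -s - 1 = (a - s) + -a + -1 by ring, rpow_add ht, rpow_add ht, rpow_neg_one]
  field_simp

lemma rpow_mul_comp_div_le_of_le_rpow_neg {ψ : ℝ → ℝ} {C γ ρ t : ℝ}
    (hψ : ∀ r, 0 < r → ψ r ≤ C * r ^ (-γ)) (hρ : 0 < ρ) (ht : 0 < t) (s : ℝ) :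
    t ^ (-s - 1) * ψ (ρ / t) ≤ C * ρ ^ (-γ) * t ^ (γ - s - 1) :=
  calc t ^ (-s - 1) * ψ (ρ / t) ≤ t ^ (-s - 1) * (C * (ρ / t) ^ (-γ)) := by
        gcongr
        exact hψ _ (by positivity)
    _ = C * ρ ^ (-γ) * t ^ (γ - s - 1) := by
        rw [div_rpow hρ.le ht.le, rpow_neg ht.le γ, show γ - s - 1 = -s - 1 + γ by ring,
          rpow_add ht]
        field_simp

lemma integral_Ioc_zero_rpow_sub_one {p η : ℝ} (hp : 0 < p) (hη : 0 ≤ η) :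
    ∫ t in Ioc 0 η, t ^ (p - 1) = η ^ p / p := by
  rw [← intervalIntegral.integral_of_le hη, integral_rpow (Or.inl (by linarith)),
    sub_add_cancel, zero_rpow hp.ne', sub_zero]

lemma setIntegral_Ioc_zero_rpow_mul_comp_div_le {ψ : ℝ → ℝ} {C γ s ρ η : ℝ}
    (hψ0 : ∀ r, 0 ≤ ψ r) (hψ : ∀ r, 0 < r → ψ r ≤ C * r ^ (-γ)) (hγ : s < γ)
    (hρ : 0 < ρ) (hη : 0 ≤ η) :
    ∫ t in Ioc 0 η, t ^ (-s - 1) * ψ (ρ / t) ≤ C / (γ - s) * η ^ (γ - s) / ρ ^ γ := by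
  have hmajorant : IntegrableOn (fun t ↦ C * ρ ^ (-γ) * t ^ (γ - s - 1)) (Ioc 0 η) :=
    ((intervalIntegral.intervalIntegrable_rpow' (by linarith)).const_mul _).1
  calc ∫ t in Ioc 0 η, t ^ (-s - 1) * ψ (ρ / t)
      ≤ ∫ t in Ioc 0 η, C * ρ ^ (-γ) * t ^ (γ - s - 1) :=
        setIntegral_mono_of_nonneg (fun t ht ↦ mul_nonneg (rpow_nonneg ht.1.le _) (hψ0 _))
          (fun t ht ↦ rpow_mul_comp_div_le_of_le_rpow_neg hψ hρ ht.1 s) hmajorant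
    _ = C / (γ - s) * η ^ (γ - s) / ρ ^ γ := by
        rw [integral_const_mul, integral_Ioc_zero_rpow_sub_one (sub_pos.2 hγ) hη,
          rpow_neg hρ.le]
        field_simp

theorem small_scale_part_decay_general (d : ℕ) (s : ℝ) (hs : 0 ≤ s)
    (ψ : ℝ → ℝ) (hψ0 : ∀ r, 0 ≤ ψ r)
    (γ Cγ : ℝ) (hγ : s < γ) (hCγ : 0 < Cγ)
    (hdecay : ∀ r : ℝ, 0 ≤ r → ψ r ≤ Cγ * (1 + r ^ 2) ^ (-γ / 2))
    (c : ℝ) (hc : 0 ≤ c) :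
    ∃ C' : ℝ, 0 < C' ∧ ∀ η : ℝ, 0 < η → ∀ x : EuclideanSpace ℝ (Fin d), x ≠ 0 →
      0 ≤ c * (∫ t in Ioc (0:ℝ) η, t ^ ((d:ℝ) - s) * (t ^ (-(d:ℝ)) * ψ (‖x‖ / t)) / t) ∧
      c * (∫ t in Ioc (0:ℝ) η, t ^ ((d:ℝ) - s) * (t ^ (-(d:ℝ)) * ψ (‖x‖ / t)) / t)
        ≤ C' * η ^ (γ - s) / ‖x‖ ^ γ := by
  have hψ : ∀ r, 0 < r → ψ r ≤ Cγ * r ^ (-γ) := fun r hr ↦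
    (hdecay r hr.le).trans (by gcongr; exact one_add_sq_rpow_neg_half_le hr (hs.trans hγ.le))
  have hγs : 0 < γ - s := sub_pos.2 hγ
  refine ⟨(c + 1) * (Cγ / (γ - s)), by positivity, ?_⟩
  intro η hη x hx
  have hρ : 0 < ‖x‖ := norm_pos_iff.2 hx
  rw [setIntegral_congr_fun measurableSet_Ioc
    fun t ht ↦ rpow_sub_mul_rpow_neg_mul_div_self ht.1 (d : ℝ) s (ψ (‖x‖ / t))]
  have hbound := setIntegral_Ioc_zero_rpow_mul_comp_div_le hψ0 hψ hγ hρ hη.le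
  refine ⟨mul_nonneg hc (setIntegral_nonneg measurableSet_Ioc
    fun t ht ↦ mul_nonneg (rpow_nonneg ht.1.le _) (hψ0 _)), ?_⟩
  calc c * ∫ t in Ioc 0 η, t ^ (-s - 1) * ψ (‖x‖ / t)
      ≤ c * (Cγ / (γ - s) * η ^ (γ - s) / ‖x‖ ^ γ) := by gcongr
    _ ≤ (c + 1) * (Cγ / (γ - s) * η ^ (γ - s) / ‖x‖ ^ γ) := by
        gcongr
        linarith
    _ = (c + 1) * (Cγ / (γ - s)) * η ^ (γ - s) / ‖x‖ ^ γ := by ring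

/-- decay of the small-scale part `f_η = g - g_η` of the truncated Riesz
potential: `f_η(x) = c_{φ,d,s} ∫₀^η t^{d-s} φ_t(x) dt/t` with `φ(x) = ψ(|x|)`,
`φ_t(x) = t^{-d} ψ(|x|/t)`. If `ψ(r) ≤ C_γ (1+r²)^{-γ/2}` for some `γ > s`, then
`0 ≤ f_η(x) ≤ C' η^{γ-s}/|x|^γ` for `x ≠ 0`. -/
theorem small_scale_part_decay (d : ℕ) (hd : 1 ≤ d) (s : ℝ) (hs : 0 ≤ s)
    (hsd : s < d)
    (ψ : ℝ → ℝ) (hψ0 : ∀ r, 0 ≤ ψ r) (hcont : Continuous ψ)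
    (γ Cγ : ℝ) (hγ : s < γ) (hCγ : 0 < Cγ)
    (hdecay : ∀ r : ℝ, 0 ≤ r → ψ r ≤ Cγ * (1 + r ^ 2) ^ (-γ / 2))
    (c : ℝ) (hc : 0 ≤ c) :
    ∃ C' : ℝ, 0 < C' ∧ ∀ η : ℝ, 0 < η → ∀ x : EuclideanSpace ℝ (Fin d), x ≠ 0 →
      0 ≤ c * (∫ t in Ioc (0:ℝ) η, t ^ ((d:ℝ) - s) * (t ^ (-(d:ℝ)) * ψ (‖x‖ / t)) / t) ∧
      c * (∫ t in Ioc (0:ℝ) η, t ^ ((d:ℝ) - s) * (t ^ (-(d:ℝ)) * ψ (‖x‖ / t)) / t)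
        ≤ C' * η ^ (γ - s) / ‖x‖ ^ γ :=
  small_scale_part_decay_general d s hs ψ hψ0 γ Cγ hγ hCγ hdecay c hc
end

section
/- Let 0 ≤ s < d and φ as in the truncation scheme, with additionally φ ∈ C¹(ℝ^d∖{0}) and |x||∇φ(x)| ≤ C φ(c x) for some constants C > 0, c ∈ (0,1). Then for every η > 0 and x ≠ 0, |x| |∇f_η(x)| ≤ C c^{-s} f_{η/c}(x) (up to a multiplicative constant depending only on d, s, φ), where f_η = g − g_η. -/
/-! Formally, `‖x‖ ‖∇f_η(x)‖ ≤ c_φ ∫₀^η t^{-s-1} ‖x/t‖ ‖∇φ(x/t)‖ dt`, which is at most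
`C c_φ ∫₀^η t^{-s-1} φ(cx/t) dt = C c^{-s} f_{η/c}(x)` (substitute `t = c u`). Nothing makes `f_η`
differentiable, or even finite, so we bound difference quotients instead: the fundamental theorem
of calculus along the segment `[x, y]` and Tonelli give
`|f_η(y) - f_η(x)| ≤ 2 C c^{-s} ‖y - x‖ / ‖x‖ · sup_{[x, y]} f_{η/c}`. This suffices because
`f_{η/c}` is continuous at `x`: its part over `(η, η/c]` by dominated convergence, and its part over
`(0, η]` is `f_η`, which is continuous where it is differentiable and positive. Where `f_η` is not
differentiable, or vanishes (a minimum), its derivative is `0`. -/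

open MeasureTheory Filter Set Topology
open scoped ENNReal

lemma norm_fderiv_le_of_forall_gt {E F : Type*} [NormedAddCommGroup E] [NormedSpace ℝ E]
    [NormedAddCommGroup F] [NormedSpace ℝ F] {f : E → F} {x : E} {K R : ℝ} (hK : 0 ≤ K)
    (hR : 0 ≤ R) (h : ∀ R' > R, ∀ᶠ y in 𝓝 x, ‖f y - f x‖ ≤ K * R' * ‖y - x‖) :
    ‖fderiv ℝ f x‖ ≤ K * R :=
  ge_of_tendsto (x := 𝓝[>] R) ((continuous_const_mul K).tendsto R |>.mono_left nhdsWithin_le_nhds)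
    (eventually_nhdsWithin_of_forall fun R' (hR' : R < R') =>
      norm_fderiv_le_of_lip' ℝ (mul_nonneg hK (hR.trans hR'.le)) (h R' hR'))

lemma continuousAt_of_continuousAt_toReal {X : Type*} [TopologicalSpace X] {g : X → ℝ≥0∞}
    {x : X} (h : ContinuousAt (fun y => (g y).toReal) x) (hx : 0 < (g x).toReal) :
    ContinuousAt g x := by
  have hfin : ∀ᶠ y in 𝓝 x, g y = ENNReal.ofReal (g y).toReal :=
    (h.eventually (lt_mem_nhds hx)).mono fun y hy =>
      (ENNReal.ofReal_toReal (ENNReal.toReal_pos_iff.1 hy).2.ne).symm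
  exact (ENNReal.continuous_ofReal.continuousAt.comp h).congr_of_eventuallyEq hfin

lemma abs_toReal_sub_toReal_le {a b d : ℝ≥0∞} (hab : a ≤ b + d) (hba : b ≤ a + d) (hd : d ≠ ∞) :
    |a.toReal - b.toReal| ≤ d.toReal := by
  by_cases ha : a = ∞
  · have hb : b = ∞ := by simpa [ha, hd] using hab
    simp [ha, hb]
  have hb : b ≠ ∞ := ne_top_of_le_ne_top (ENNReal.add_ne_top.2 ⟨ha, hd⟩) hba
  rw [abs_sub_le_iff, sub_le_iff_le_add', sub_le_iff_le_add', ← ENNReal.toReal_add hb hd,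
    ← ENNReal.toReal_add ha hd]
  exact ⟨ENNReal.toReal_mono (ENNReal.add_ne_top.2 ⟨hb, hd⟩) hab,
    ENNReal.toReal_mono (ENNReal.add_ne_top.2 ⟨ha, hd⟩) hba⟩

lemma abs_toReal_lintegral_sub_le {α : Type*} [MeasurableSpace α] {μ : Measure α} {f g : α → ℝ}
    (hf : Measurable f) (hg : Measurable g) (hfin : ∫⁻ a, ‖f a - g a‖ₑ ∂μ ≠ ∞) :
    |(∫⁻ a, ENNReal.ofReal (f a) ∂μ).toReal - (∫⁻ a, ENNReal.ofReal (g a) ∂μ).toReal|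
      ≤ (∫⁻ a, ‖f a - g a‖ₑ ∂μ).toReal := by
  have key : ∀ u v : α → ℝ, Measurable v →
      ∫⁻ a, ENNReal.ofReal (u a) ∂μ ≤ ∫⁻ a, ENNReal.ofReal (v a) ∂μ + ∫⁻ a, ‖u a - v a‖ₑ ∂μ := by
    intro u v hv
    rw [← lintegral_add_left hv.ennreal_ofReal]
    refine lintegral_mono fun a => ?_
    rw [Real.enorm_eq_ofReal_abs]
    exact (ENNReal.ofReal_le_ofReal (by linarith [le_abs_self (u a - v a)])).trans
      ENNReal.ofReal_add_le
  refine abs_toReal_sub_toReal_le (key f g hg) ?_ hfin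
  simpa only [← enorm_neg (f _ - g _), neg_sub] using key g f hf

-- Dominated convergence, with a uniform bound near `x` from the tube lemma.
lemma continuousAt_setLIntegral_ofReal {X : Type*} [TopologicalSpace X]
    [FirstCountableTopology X] {g : X → ℝ → ℝ} {x : X} {K S : Set ℝ} (hK : IsCompact K)
    (hS : MeasurableSet S) (hSK : S ⊆ K) (hg : ∀ t ∈ K, ContinuousAt (Function.uncurry g) (x, t))
    (hmeas : ∀ y, Measurable (g y)) :
    ContinuousAt (fun y => ∫⁻ t in S, ENNReal.ofReal (g y t)) x := by
  have hgx : ContinuousOn (g x) K := fun t ht =>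
    ((hg t ht).comp (continuousAt_const.prodMk continuousAt_id)).continuousWithinAt
  obtain ⟨M, hM⟩ := hK.exists_bound_of_continuousOn hgx
  have hbound : ∀ᶠ y in 𝓝 x, ∀ t ∈ K, g y t < M + 1 :=
    hK.eventually_forall_of_forall_eventually fun t ht =>
      (hg t ht).eventually (gt_mem_nhds ((le_abs_self _).trans (hM t ht) |>.trans_lt
        (lt_add_one M)))
  refine tendsto_lintegral_filter_of_dominated_convergence (fun _ => ENNReal.ofReal (M + 1))
    (Eventually.of_forall fun y => (hmeas y).ennreal_ofReal) ?_ ?_ ?_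
  · exact hbound.mono fun y hy => ae_restrict_of_forall_mem hS fun t ht =>
      ENNReal.ofReal_le_ofReal (hy t (hSK ht)).le
  · rw [setLIntegral_const]
    exact ENNReal.mul_ne_top ENNReal.ofReal_ne_top
      ((measure_mono hSK).trans_lt hK.measure_lt_top).ne
  · exact ae_restrict_of_forall_mem hS fun t ht => ENNReal.tendsto_ofReal
      ((hg t (hSK ht)).comp_of_eq (continuousAt_id.prodMk continuousAt_const) rfl)

lemma enorm_sub_le_lintegral_enorm_fderiv {E F : Type*} [NormedAddCommGroup E] [NormedSpace ℝ E]
    [NormedAddCommGroup F] [NormedSpace ℝ F] [CompleteSpace F] {f : E → F} {U : Set E}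
    (hU : IsOpen U) (hf : ContDiffOn ℝ 1 f U) {x v : E}
    (hseg : ∀ σ ∈ Icc (0 : ℝ) 1, x + σ • v ∈ U) :
    ‖f (x + v) - f x‖ₑ ≤ ∫⁻ σ in Ioc (0 : ℝ) 1, ‖fderiv ℝ f (x + σ • v)‖ₑ * ‖v‖ₑ := by
  have hline : Continuous fun σ : ℝ => x + σ • v := by fun_prop
  have hderiv : ∀ σ ∈ uIcc (0 : ℝ) 1,
      HasDerivAt (fun σ : ℝ => f (x + σ • v)) (fderiv ℝ f (x + σ • v) v) σ := by
    intro σ hσ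
    rw [uIcc_of_le zero_le_one] at hσ
    have hfσ := (hf.differentiableOn one_ne_zero).differentiableAt
      (hU.mem_nhds (hseg σ hσ))
    exact hfσ.hasFDerivAt.comp_hasDerivAt (f := fun σ : ℝ => x + σ • v) σ
      (by simpa using ((hasDerivAt_id σ).smul_const v).const_add x)
  have hcont : ContinuousOn (fun σ : ℝ => fderiv ℝ f (x + σ • v) v) (uIcc 0 1) := by
    rw [uIcc_of_le zero_le_one]
    exact ((hf.continuousOn_fderiv_of_isOpen hU le_rfl).comp hline.continuousOn
      fun σ hσ => hseg σ hσ).clm_apply continuousOn_const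
  have hFTC := intervalIntegral.integral_eq_sub_of_hasDerivAt hderiv hcont.intervalIntegrable
  simp only [one_smul, zero_smul, add_zero] at hFTC
  rw [← hFTC, intervalIntegral.integral_of_le zero_le_one]
  exact (enorm_integral_le_lintegral_enorm _).trans
    (lintegral_mono fun σ => ContinuousLinearMap.le_opENorm _ _)

section SmallScalePart

variable {E : Type*} [NormedAddCommGroup E] [NormedSpace ℝ E]

noncomputable def scaleIntegrand (φ : E → ℝ) (s : ℝ) (y : E) (t : ℝ) : ℝ :=
  t ^ (-s - 1) * φ (t⁻¹ • y)

/-- The paper's `f_a(y) = c_{φ,d,s} ∫₀^a t^{d-s} φ_t(y) dt/t` is `c_{φ,d,s}` times the `toReal` of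
this, as `t^{d-s} φ_t(y) / t = t^{-s-1} φ(y/t)`. Taking the integral in `ℝ≥0∞` presupposes no
integrability. -/
noncomputable def smallScalePart (φ : E → ℝ) (s a : ℝ) (y : E) : ℝ≥0∞ :=
  ∫⁻ t in Ioc 0 a, ENNReal.ofReal (scaleIntegrand φ s y t)

lemma smallScalePart_smul (φ : E → ℝ) (s a : ℝ) {c : ℝ} (hc : 0 < c) (y : E) :
    smallScalePart φ s a (c • y) = ENNReal.ofReal (c ^ (-s)) * smallScalePart φ s (a / c) y := by
  have himage : (c * ·) '' Ioc 0 (a / c) = Ioc 0 a := by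
    rw [image_mul_left_Ioc hc, mul_zero, mul_div_cancel₀ _ hc.ne']
  rw [smallScalePart, ← himage, lintegral_image_eq_lintegral_abs_deriv_mul (f := (c * ·))
    (f' := fun _ => c) measurableSet_Ioc
    (fun u _ => by simpa using ((hasDerivAt_id u).const_mul c).hasDerivWithinAt)
    (mul_right_injective₀ hc.ne').injOn, smallScalePart,
    ← lintegral_const_mul' _ _ ENNReal.ofReal_ne_top]
  refine setLIntegral_congr_fun measurableSet_Ioc fun u hu => ?_
  have hpow : (c * u) ^ (-s - 1) = c ^ (-s) * c⁻¹ * u ^ (-s - 1) := by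
    rw [Real.mul_rpow hc.le hu.1.le, Real.rpow_sub_one hc.ne']; ring
  rw [scaleIntegrand, scaleIntegrand, mul_inv, mul_comm c⁻¹, mul_smul, inv_smul_smul₀ hc.ne',
    abs_of_pos hc, ← ENNReal.ofReal_mul hc.le, hpow, ← ENNReal.ofReal_mul (by positivity)]
  congr 1; field_simp

lemma smallScalePart_eq_add (φ : E → ℝ) (s : ℝ) {a b : ℝ} (ha : 0 ≤ a) (hab : a ≤ b) (y : E) :
    smallScalePart φ s b y =
      smallScalePart φ s a y + ∫⁻ t in Ioc a b, ENNReal.ofReal (scaleIntegrand φ s y t) := by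
  rw [smallScalePart, smallScalePart, ← Ioc_union_Ioc_eq_Ioc ha hab,
    lintegral_union measurableSet_Ioc (Ioc_disjoint_Ioc_of_le le_rfl)]

lemma continuousAt_scaleIntegrand {φ : E → ℝ} (hφ : ContinuousOn φ {0}ᶜ) (s : ℝ) {x : E}
    (hx : x ≠ 0) {t : ℝ} (ht : 0 < t) :
    ContinuousAt (fun p : E × ℝ => scaleIntegrand φ s p.1 p.2) (x, t) := by
  have hφx : ContinuousAt φ (t⁻¹ • x) :=
    hφ.continuousAt (isOpen_compl_singleton.mem_nhds (smul_ne_zero (inv_ne_zero ht.ne') hx))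
  exact ((Real.continuousAt_rpow_const _ _ (Or.inl ht.ne')).comp continuousAt_snd).mul
    (hφx.comp (f := fun p : E × ℝ => p.2⁻¹ • p.1)
      ((continuousAt_snd (p := (x, t)) |>.inv₀ ht.ne').smul continuousAt_fst))

lemma smallScalePart_ne_top_of_le {φ : E → ℝ} (hφ : ContinuousOn φ {0}ᶜ) (s : ℝ)
    {a b : ℝ} (ha : 0 < a) (hab : a ≤ b) {x : E} (hx : x ≠ 0)
    (hfin : smallScalePart φ s a x ≠ ∞) : smallScalePart φ s b x ≠ ∞ := by
  have hcont : ContinuousOn (scaleIntegrand φ s x) (Icc a b) := fun t ht =>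
    ((continuousAt_scaleIntegrand hφ s hx (ha.trans_le ht.1)).comp_of_eq
      (continuousAt_const.prodMk continuousAt_id) rfl).continuousWithinAt
  rw [smallScalePart_eq_add φ s ha.le hab]
  exact ENNReal.add_ne_top.2 ⟨hfin, ((hcont.integrableOn_compact isCompact_Icc).mono_set
    Ioc_subset_Icc_self).lintegral_lt_top.ne⟩

variable [MeasurableSpace E] [BorelSpace E]

lemma measurable_scaleIntegrand {φ : E → ℝ} (hφ : Measurable φ) (s : ℝ) (y : E) :
    Measurable (scaleIntegrand φ s y) :=
  (measurable_id.pow_const _).mul (hφ.comp (measurable_inv.smul_const y))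

lemma setIntegral_rpow_mul_eq_toReal_smallScalePart {φ : E → ℝ} (hφ0 : ∀ z, 0 ≤ φ z)
    (hφ : Measurable φ) (p s a : ℝ) (y : E) :
    ∫ t in Ioc (0 : ℝ) a, t ^ (p - s) * (t ^ (-p) * φ (t⁻¹ • y)) / t =
      (smallScalePart φ s a y).toReal := by
  have hIoc : ∀ t ∈ Ioc (0 : ℝ) a,
      t ^ (p - s) * (t ^ (-p) * φ (t⁻¹ • y)) / t = scaleIntegrand φ s y t := fun t ht => by
    have hpow : t ^ (p - s) * t ^ (-p) = t ^ (-s) := by rw [← Real.rpow_add ht.1]; ring_nf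
    rw [scaleIntegrand, Real.rpow_sub_one ht.1.ne', ← hpow]
    ring
  rw [setIntegral_congr_fun measurableSet_Ioc hIoc, smallScalePart,
    integral_eq_lintegral_of_nonneg_ae (f := scaleIntegrand φ s y)
      (ae_restrict_of_forall_mem measurableSet_Ioc fun t ht =>
        mul_nonneg (Real.rpow_nonneg ht.1.le _) (hφ0 _))
    (measurable_scaleIntegrand hφ s y).aestronglyMeasurable]

lemma continuousAt_smallScalePart_of_le {φ : E → ℝ} (hφ : ContinuousOn φ {0}ᶜ) (s : ℝ)
    {a b : ℝ} (ha : 0 < a) (hab : a ≤ b) {x : E} (hx : x ≠ 0)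
    (hcont : ContinuousAt (smallScalePart φ s a) x) :
    ContinuousAt (smallScalePart φ s b) x := by
  have htail := continuousAt_setLIntegral_ofReal (K := Icc a b) isCompact_Icc measurableSet_Ioc
    Ioc_subset_Icc_self (fun t ht => continuousAt_scaleIntegrand hφ s hx (ha.trans_le ht.1))
    (measurable_scaleIntegrand (measurable_of_continuousOn_compl_singleton 0 hφ) s)
  rw [show smallScalePart φ s b = _ from funext (smallScalePart_eq_add φ s ha.le hab)]
  exact hcont.add htail

end SmallScalePart

section GradientBound

variable {E : Type*} [NormedAddCommGroup E] [NormedSpace ℝ E] {φ : E → ℝ} {s C c : ℝ}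

lemma norm_fderiv_inv_smul_mul_le
    (hgrad : ∀ z : E, z ≠ 0 → ‖z‖ * ‖fderiv ℝ φ z‖ ≤ C * φ (c • z)) {z : E} (hz : z ≠ 0)
    {t : ℝ} (ht : 0 < t) (v : E) :
    ‖fderiv ℝ φ (t⁻¹ • z)‖ * ‖t⁻¹ • v‖ ≤ C * ‖v‖ / ‖z‖ * φ (t⁻¹ • c • z) := by
  have h := hgrad (t⁻¹ • z) (smul_ne_zero (inv_ne_zero ht.ne') hz)
  rw [smul_comm] at h
  rw [norm_smul, Real.norm_of_nonneg (inv_pos.2 ht).le] at h ⊢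
  have hzpos := norm_pos_iff.2 hz
  rw [div_mul_eq_mul_div, le_div_iff₀ hzpos]
  calc ‖fderiv ℝ φ (t⁻¹ • z)‖ * (t⁻¹ * ‖v‖) * ‖z‖
      = t⁻¹ * ‖z‖ * ‖fderiv ℝ φ (t⁻¹ • z)‖ * ‖v‖ := by ring
    _ ≤ C * φ (t⁻¹ • c • z) * ‖v‖ := by gcongr
    _ = C * ‖v‖ * φ (t⁻¹ • c • z) := by ring

lemma enorm_scaleIntegrand_sub_le (hφ0 : ∀ z, 0 ≤ φ z) (hφ : ContDiffOn ℝ 1 φ {0}ᶜ)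
    (hgrad : ∀ z : E, z ≠ 0 → ‖z‖ * ‖fderiv ℝ φ z‖ ≤ C * φ (c • z)) (hC : 0 ≤ C)
    {x v : E} {r : ℝ} (hr : 0 < r) (hseg : ∀ σ ∈ Icc (0 : ℝ) 1, r ≤ ‖x + σ • v‖)
    {t : ℝ} (ht : 0 < t) :
    ‖scaleIntegrand φ s (x + v) t - scaleIntegrand φ s x t‖ₑ ≤ ENNReal.ofReal (C * ‖v‖ / r) *
      ∫⁻ σ in Ioc (0 : ℝ) 1, ENNReal.ofReal (scaleIntegrand φ s (c • (x + σ • v)) t) := by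
  have hne : ∀ σ ∈ Icc (0 : ℝ) 1, x + σ • v ≠ 0 := fun σ hσ =>
    norm_pos_iff.1 (hr.trans_le (hseg σ hσ))
  have hsmul : ∀ σ : ℝ, t⁻¹ • x + σ • t⁻¹ • v = t⁻¹ • (x + σ • v) := fun σ => by
    rw [smul_add, smul_comm]
  have hFTC := enorm_sub_le_lintegral_enorm_fderiv isOpen_compl_singleton hφ
    (x := t⁻¹ • x) (v := t⁻¹ • v) fun σ hσ => by
      rw [hsmul]; exact smul_ne_zero (inv_ne_zero ht.ne') (hne σ hσ)
  have hpow : 0 ≤ t ^ (-s - 1) := Real.rpow_nonneg ht.le _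
  calc ‖scaleIntegrand φ s (x + v) t - scaleIntegrand φ s x t‖ₑ
      = ENNReal.ofReal (t ^ (-s - 1)) * ‖φ (t⁻¹ • x + t⁻¹ • v) - φ (t⁻¹ • x)‖ₑ := by
        rw [scaleIntegrand, scaleIntegrand, ← mul_sub, enorm_mul, Real.enorm_of_nonneg hpow,
          smul_add]
    _ ≤ ENNReal.ofReal (t ^ (-s - 1)) *
        ∫⁻ σ in Ioc (0 : ℝ) 1, ENNReal.ofReal (C * ‖v‖ / r * φ (t⁻¹ • c • (x + σ • v))) := by
        refine mul_le_mul_right (hFTC.trans (lintegral_mono_ae ?_)) _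
        refine ae_restrict_of_forall_mem measurableSet_Ioc fun σ hσ => ?_
        have hσ' := Ioc_subset_Icc_self hσ
        rw [hsmul, ← ofReal_norm, ← ofReal_norm,
          ← ENNReal.ofReal_mul (norm_nonneg _)]
        refine ENNReal.ofReal_le_ofReal
          ((norm_fderiv_inv_smul_mul_le hgrad (hne σ hσ') ht v).trans ?_)
        gcongr
        · exact hφ0 _
        · exact hseg σ hσ'
    _ = ENNReal.ofReal (C * ‖v‖ / r) *
        ∫⁻ σ in Ioc (0 : ℝ) 1, ENNReal.ofReal (scaleIntegrand φ s (c • (x + σ • v)) t) := by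
        rw [← lintegral_const_mul' _ _ ENNReal.ofReal_ne_top,
          ← lintegral_const_mul' _ _ ENNReal.ofReal_ne_top]
        refine lintegral_congr fun σ => ?_
        rw [← ENNReal.ofReal_mul hpow, ← ENNReal.ofReal_mul (by positivity), scaleIntegrand]
        ring_nf

variable [MeasurableSpace E] [BorelSpace E]

lemma lintegral_enorm_scaleIntegrand_sub_le (hφ0 : ∀ z, 0 ≤ φ z) (hφ : ContDiffOn ℝ 1 φ {0}ᶜ)
    (hgrad : ∀ z : E, z ≠ 0 → ‖z‖ * ‖fderiv ℝ φ z‖ ≤ C * φ (c • z)) (hC : 0 ≤ C) (hc : 0 < c)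
    {x v : E} {r : ℝ} (hr : 0 < r) (hseg : ∀ σ ∈ Icc (0 : ℝ) 1, r ≤ ‖x + σ • v‖) (η : ℝ) :
    ∫⁻ t in Ioc 0 η, ‖scaleIntegrand φ s (x + v) t - scaleIntegrand φ s x t‖ₑ ≤
      ENNReal.ofReal (C * ‖v‖ / r) * ENNReal.ofReal (c ^ (-s)) *
        ∫⁻ σ in Ioc (0 : ℝ) 1, smallScalePart φ s (η / c) (x + σ • v) := by
  have hmeas : Measurable fun p : ℝ × ℝ =>
      ENNReal.ofReal (scaleIntegrand φ s (c • (x + p.2 • v)) p.1) := by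
    have hφm := measurable_of_continuousOn_compl_singleton 0 hφ.continuousOn
    have hline : Continuous fun q : ℝ × ℝ => q.1 • c • (x + q.2 • v) := by fun_prop
    exact ((measurable_fst.pow_const _).mul
      (hφm.comp (hline.measurable.comp (measurable_fst.inv.prodMk measurable_snd)))).ennreal_ofReal
  -- Tonelli, then `t = c u` in each inner integral.
  calc ∫⁻ t in Ioc 0 η, ‖scaleIntegrand φ s (x + v) t - scaleIntegrand φ s x t‖ₑ
      ≤ ∫⁻ t in Ioc 0 η, ENNReal.ofReal (C * ‖v‖ / r) *
          ∫⁻ σ in Ioc (0 : ℝ) 1, ENNReal.ofReal (scaleIntegrand φ s (c • (x + σ • v)) t) :=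
        lintegral_mono_ae <| ae_restrict_of_forall_mem measurableSet_Ioc fun t ht =>
          enorm_scaleIntegrand_sub_le hφ0 hφ hgrad hC hr hseg ht.1
    _ = ENNReal.ofReal (C * ‖v‖ / r) *
          ∫⁻ σ in Ioc (0 : ℝ) 1, smallScalePart φ s η (c • (x + σ • v)) := by
        rw [lintegral_const_mul' _ _ ENNReal.ofReal_ne_top,
          lintegral_lintegral_swap hmeas.aemeasurable]
        rfl
    _ = _ := by
        simp_rw [smallScalePart_smul φ s η hc]
        rw [lintegral_const_mul' _ _ ENNReal.ofReal_ne_top, mul_assoc]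

lemma abs_toReal_smallScalePart_sub_le (hφ0 : ∀ z, 0 ≤ φ z) (hφ : ContDiffOn ℝ 1 φ {0}ᶜ)
    (hgrad : ∀ z : E, z ≠ 0 → ‖z‖ * ‖fderiv ℝ φ z‖ ≤ C * φ (c • z)) (hC : 0 ≤ C) (hc : 0 < c)
    {η B r : ℝ} (hB : 0 ≤ B) (hr : 0 < r) {x v : E}
    (hseg : ∀ σ ∈ Icc (0 : ℝ) 1,
      r ≤ ‖x + σ • v‖ ∧ smallScalePart φ s (η / c) (x + σ • v) ≤ ENNReal.ofReal B) :
    |(smallScalePart φ s η (x + v)).toReal - (smallScalePart φ s η x).toReal| ≤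
      C * c ^ (-s) * B / r * ‖v‖ := by
  have hφm := measurable_of_continuousOn_compl_singleton 0 hφ.continuousOn
  have hσ : ∫⁻ σ in Ioc (0 : ℝ) 1, smallScalePart φ s (η / c) (x + σ • v) ≤ ENNReal.ofReal B :=
    calc _ ≤ ∫⁻ _ in Ioc (0 : ℝ) 1, ENNReal.ofReal B :=
          lintegral_mono_ae <| ae_restrict_of_forall_mem measurableSet_Ioc fun σ hσ =>
            (hseg σ (Ioc_subset_Icc_self hσ)).2
      _ = ENNReal.ofReal B := by simp
  have hd := (lintegral_enorm_scaleIntegrand_sub_le hφ0 hφ hgrad hC hc hr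
    (fun σ hσ => (hseg σ hσ).1) η).trans (mul_le_mul_right hσ _)
  rw [← ENNReal.ofReal_mul (by positivity), ← ENNReal.ofReal_mul (by positivity)] at hd
  calc _ ≤ (∫⁻ t in Ioc 0 η, ‖scaleIntegrand φ s (x + v) t - scaleIntegrand φ s x t‖ₑ).toReal :=
        abs_toReal_lintegral_sub_le (measurable_scaleIntegrand hφm s _)
          (measurable_scaleIntegrand hφm s _) (ne_top_of_le_ne_top ENNReal.ofReal_ne_top hd)
    _ ≤ C * ‖v‖ / r * c ^ (-s) * B := ENNReal.toReal_le_of_le_ofReal (by positivity) hd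
    _ = C * c ^ (-s) * B / r * ‖v‖ := by ring

lemma eventually_abs_toReal_smallScalePart_sub_le (hφ0 : ∀ z, 0 ≤ φ z)
    (hφ : ContDiffOn ℝ 1 φ {0}ᶜ)
    (hgrad : ∀ z : E, z ≠ 0 → ‖z‖ * ‖fderiv ℝ φ z‖ ≤ C * φ (c • z)) (hC : 0 ≤ C) (hc : 0 < c)
    {η B : ℝ} (hB0 : 0 ≤ B) {x : E} (hx : x ≠ 0)
    (hB : ∀ᶠ z in 𝓝 x, smallScalePart φ s (η / c) z ≤ ENNReal.ofReal B) :
    ∀ᶠ y in 𝓝 x, |(smallScalePart φ s η y).toReal - (smallScalePart φ s η x).toReal| ≤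
      2 * C * c ^ (-s) * B / ‖x‖ * ‖y - x‖ := by
  obtain ⟨ρ, hρ, hball⟩ := Metric.eventually_nhds_iff_ball.1 hB
  have hxpos := norm_pos_iff.2 hx
  filter_upwards [Metric.ball_mem_nhds x (lt_min hρ (half_pos hxpos))] with y hy
  rw [Metric.mem_ball, dist_eq_norm, lt_min_iff] at hy
  have hseg : ∀ σ ∈ Icc (0 : ℝ) 1, ‖x‖ / 2 ≤ ‖x + σ • (y - x)‖ ∧
      smallScalePart φ s (η / c) (x + σ • (y - x)) ≤ ENNReal.ofReal B := by
    intro σ hσ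
    have hσv : ‖σ • (y - x)‖ ≤ ‖y - x‖ := by
      rw [norm_smul, Real.norm_of_nonneg hσ.1]
      exact mul_le_of_le_one_left (norm_nonneg _) hσ.2
    have htri := norm_sub_le (x + σ • (y - x)) (σ • (y - x))
    rw [add_sub_cancel_right] at htri
    refine ⟨by linarith, hball _ ?_⟩
    rw [Metric.mem_ball, dist_eq_norm, add_sub_cancel_left]
    linarith
  have h := abs_toReal_smallScalePart_sub_le hφ0 hφ hgrad hC hc hB0 (half_pos hxpos) hseg
  rwa [add_sub_cancel, div_div_eq_mul_div, mul_comm _ (2 : ℝ), ← mul_assoc, ← mul_assoc] at h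

lemma norm_fderiv_smallScalePart_le (hφ0 : ∀ z, 0 ≤ φ z) (hφ : ContDiffOn ℝ 1 φ {0}ᶜ)
    (hgrad : ∀ z : E, z ≠ 0 → ‖z‖ * ‖fderiv ℝ φ z‖ ≤ C * φ (c • z)) (hC : 0 ≤ C) (hc : 0 < c)
    (hc1 : c ≤ 1) {κ : ℝ} (hκ : 0 ≤ κ) {η : ℝ} (hη : 0 < η) {x : E} (hx : x ≠ 0) :
    ‖fderiv ℝ (fun y => κ * (smallScalePart φ s η y).toReal) x‖ ≤
      2 * C * c ^ (-s) * κ / ‖x‖ * (smallScalePart φ s (η / c) x).toReal := by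
  set F := fun y => κ * (smallScalePart φ s η y).toReal
  have hK : 0 ≤ 2 * C * c ^ (-s) * κ / ‖x‖ := by positivity
  have hR : 0 ≤ (smallScalePart φ s (η / c) x).toReal := ENNReal.toReal_nonneg
  by_cases hgood : DifferentiableAt ℝ F x ∧ F x ≠ 0
  swap
  · have hzero : fderiv ℝ F x = 0 := by
      rcases not_and_or.1 hgood with h | h
      · exact fderiv_zero_of_not_differentiableAt h
      · refine IsLocalMin.fderiv_eq_zero (Eventually.of_forall fun y => ?_)
        rw [not_not.1 h]
        exact mul_nonneg hκ ENNReal.toReal_nonneg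
    rw [hzero, norm_zero]
    positivity
  obtain ⟨hdiff, hFx⟩ := hgood
  have hκpos : 0 < κ := hκ.lt_of_ne fun h => hFx (by simp [F, ← h])
  have hGcont : ContinuousAt (fun y => (smallScalePart φ s η y).toReal) x := by
    simpa [F, hκpos.ne'] using hdiff.continuousAt.const_mul κ⁻¹
  have hGpos : 0 < (smallScalePart φ s η x).toReal :=
    ENNReal.toReal_nonneg.lt_of_ne fun h => hFx (by simp [F, ← h])
  have hηc : η ≤ η / c := le_div_self hη.le hc hc1
  have hcont := continuousAt_smallScalePart_of_le hφ.continuousOn s hη hηc hx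
    (continuousAt_of_continuousAt_toReal hGcont hGpos)
  have hfin := smallScalePart_ne_top_of_le hφ.continuousOn s hη hηc hx
    (ENNReal.toReal_pos_iff.1 hGpos).2.ne
  refine norm_fderiv_le_of_forall_gt hK hR fun R' hR' => ?_
  have hB : ∀ᶠ z in 𝓝 x, smallScalePart φ s (η / c) z ≤ ENNReal.ofReal R' :=
    (hcont.eventually (gt_mem_nhds ((ENNReal.lt_ofReal_iff_toReal_lt hfin).2 hR'))).mono
      fun _ h => h.le
  filter_upwards [eventually_abs_toReal_smallScalePart_sub_le hφ0 hφ hgrad hC hc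
    (hR.trans hR'.le) hx hB] with y hy
  calc ‖F y - F x‖
      = κ * |(smallScalePart φ s η y).toReal - (smallScalePart φ s η x).toReal| := by
        simp only [F, ← mul_sub, Real.norm_eq_abs, abs_mul, abs_of_pos hκpos]
    _ ≤ κ * (2 * C * c ^ (-s) * R' / ‖x‖ * ‖y - x‖) := by gcongr
    _ = 2 * C * c ^ (-s) * κ / ‖x‖ * R' * ‖y - x‖ := by ring

end GradientBound

theorem small_scale_part_gradient_bound_general (d : ℕ) (s : ℝ)
    (φ : EuclideanSpace ℝ (Fin d) → ℝ) (hφ0 : ∀ x, 0 ≤ φ x)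
    (hφC1 : ContDiffOn ℝ 1 φ {(0 : EuclideanSpace ℝ (Fin d))}ᶜ)
    (C c : ℝ) (hC : 0 < C) (hc : c ∈ Ioo (0:ℝ) 1)
    (hgrad : ∀ x : EuclideanSpace ℝ (Fin d), x ≠ 0 →
      ‖x‖ * ‖fderiv ℝ φ x‖ ≤ C * φ (c • x))
    (cφ : ℝ) (hcφ : 0 ≤ cφ) :
    ∃ C₀ : ℝ, 0 < C₀ ∧ ∀ η : ℝ, 0 < η → ∀ x : EuclideanSpace ℝ (Fin d), x ≠ 0 →
      ‖x‖ * ‖fderiv ℝ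
          (fun y => cφ * ∫ t in Ioc (0:ℝ) η,
            t ^ ((d:ℝ) - s) * (t ^ (-(d:ℝ)) * φ (t⁻¹ • y)) / t) x‖
        ≤ C₀ * C * c ^ (-s) *
          (cφ * ∫ t in Ioc (0:ℝ) (η / c),
            t ^ ((d:ℝ) - s) * (t ^ (-(d:ℝ)) * φ (t⁻¹ • x)) / t) := by
  refine ⟨2, two_pos, fun η hη x hx => ?_⟩
  have hφm := measurable_of_continuousOn_compl_singleton 0 hφC1.continuousOn
  simp only [setIntegral_rpow_mul_eq_toReal_smallScalePart hφ0 hφm]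
  have hbound :=
    norm_fderiv_smallScalePart_le (s := s) hφ0 hφC1 hgrad hC.le hc.1 hc.2.le hcφ hη hx
  calc ‖x‖ * ‖fderiv ℝ (fun y => cφ * (smallScalePart φ s η y).toReal) x‖
      ≤ ‖x‖ * (2 * C * c ^ (-s) * cφ / ‖x‖ * (smallScalePart φ s (η / c) x).toReal) := by
        gcongr
    _ = 2 * C * c ^ (-s) * (cφ * (smallScalePart φ s (η / c) x).toReal) := by
        field_simp [norm_ne_zero_iff.2 hx]

/-- gradient bound for the small-scale part `f_η = g - g_η`:
if `φ ∈ C¹(ℝ^d∖{0})` with `|x||∇φ(x)| ≤ C φ(c x)` for some `C > 0`, `c ∈ (0,1)`,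
then `|x||∇f_η(x)| ≤ C₀ C c^{-s} f_{η/c}(x)` (with `C₀` depending only on `d, s, φ`),
where `f_η(x) = c_{φ,d,s} ∫₀^η t^{d-s} φ_t(x) dt/t`, `φ_t(x) = t^{-d} φ(x/t)`. -/
theorem small_scale_part_gradient_bound (d : ℕ) (hd : 1 ≤ d) (s : ℝ) (hs : 0 ≤ s)
    (hsd : s < d)
    (φ : EuclideanSpace ℝ (Fin d) → ℝ) (hφ0 : ∀ x, 0 ≤ φ x)
    (hφC1 : ContDiffOn ℝ 1 φ {(0 : EuclideanSpace ℝ (Fin d))}ᶜ)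
    (C c : ℝ) (hC : 0 < C) (hc : c ∈ Ioo (0:ℝ) 1)
    (hgrad : ∀ x : EuclideanSpace ℝ (Fin d), x ≠ 0 →
      ‖x‖ * ‖fderiv ℝ φ x‖ ≤ C * φ (c • x))
    (cφ : ℝ) (hcφ : 0 ≤ cφ) :
    ∃ C₀ : ℝ, 0 < C₀ ∧ ∀ η : ℝ, 0 < η → ∀ x : EuclideanSpace ℝ (Fin d), x ≠ 0 →
      ‖x‖ * ‖fderiv ℝ
          (fun y => cφ * ∫ t in Ioc (0:ℝ) η,
            t ^ ((d:ℝ) - s) * (t ^ (-(d:ℝ)) * φ (t⁻¹ • y)) / t) x‖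
        ≤ C₀ * C * c ^ (-s) *
          (cφ * ∫ t in Ioc (0:ℝ) (η / c),
            t ^ ((d:ℝ) - s) * (t ^ (-(d:ℝ)) * φ (t⁻¹ • x)) / t) :=
  small_scale_part_gradient_bound_general d s φ hφ0 hφC1 C c hC hc hgrad cφ hcφ
end
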